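/- Normal-form instance: over the alphabet A with A_s = {a,b} and A_e = {c,d}, the sentence φ_4 = ∀x.((∃^{=2} y.(x∼y ∧ a(y))) ↔ (∃^{=2} y.(x∼y ∧ d(y)))) is equivalent, over all pairs (P,w) of a process triple and a P-execution, to φ_4' = ⋀_{θ∈T, ℓ∈Z} ∃^{=0} y.(θ(y) ∧ ψ_{3,ℓ}(y)), where Z is the set of vectors ℓ ∈ {0,…,3}^A such that ℓ(a) = 2 ≠ ℓ(d) or ℓ(d) = 2 ≠ ℓ(a). -/

import Mathlib

namespace PSyn

/-! ### Basic objects: types, alphabets, processes, events, executions -/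

/-- The three process types: system, environment, mixed. -/
inductive PType where
  | s | e | se
deriving DecidableEq

/-- A finite alphabet: letters are the naturals `0, …, n-1`;
`sys a = true` means `a` is a system action (`a ∈ A_s`), otherwise `a ∈ A_e`. -/
structure Alphabet where
  n : ℕ
  sys : ℕ → Bool

/-- An event is a pair (letter, process identity). -/
abbrev Event := ℕ × ℕ

/-- A process triple `P = (P_s, P_e, P_se)`: pairwise disjoint finite sets of processes. -/
structure ProcTriple where
  Ps : Finset ℕ
  Pe : Finset ℕ
  Pse : Finset ℕ
  disj_se : Disjoint Ps Pe
  disj_sse : Disjoint Ps Pse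
  disj_ese : Disjoint Pe Pse

def ProcTriple.ofType (P : ProcTriple) : PType → Finset ℕ
  | .s => P.Ps
  | .e => P.Pe
  | .se => P.Pse

def ProcTriple.all (P : ProcTriple) : Finset ℕ := P.Ps ∪ P.Pe ∪ P.Pse

/-- `σ ∈ Σ_s = A_s × (P_s ∪ P_se)`. -/
def isSysEvent (Alph : Alphabet) (P : ProcTriple) (σ : Event) : Prop :=
  σ.1 < Alph.n ∧ Alph.sys σ.1 = true ∧ (σ.2 ∈ P.Ps ∨ σ.2 ∈ P.Pse)

/-- `σ ∈ Σ_e = A_e × (P_e ∪ P_se)`. -/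
def isEnvEvent (Alph : Alphabet) (P : ProcTriple) (σ : Event) : Prop :=
  σ.1 < Alph.n ∧ Alph.sys σ.1 = false ∧ (σ.2 ∈ P.Pe ∨ σ.2 ∈ P.Pse)

def isEvent (Alph : Alphabet) (P : ProcTriple) (σ : Event) : Prop :=
  isSysEvent Alph P σ ∨ isEnvEvent Alph P σ

/-- A finite or infinite word over events. -/
inductive Exec where
  | fin : List Event → Exec
  | inf : (ℕ → Event) → Exec

/-- A `P`-execution: every event is an event of `P` over the alphabet. -/
def Exec.valid (Alph : Alphabet) (P : ProcTriple) : Exec → Prop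
  | .fin l => ∀ σ ∈ l, isEvent Alph P σ
  | .inf g => ∀ i, isEvent Alph P (g i)

def Exec.at? : Exec → ℕ → Option Event
  | .fin l, i => l[i]?
  | .inf g, i => some (g i)

/-- The set of positions of an execution. -/
def Exec.posDom : Exec → ℕ → Prop
  | .fin l, i => i < l.length
  | .inf _, _ => True

/-- Elements of the structure associated with `(P, w)`:
`inl p` is a process, `inr i` is a position. -/
abbrev Elem := ℕ ⊕ ℕ

/-- The universe `P ⊎ Pos(w)`. -/
def elemDom (P : ProcTriple) (w : Exec) : Elem → Prop
  | .inl p => p ∈ P.all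
  | .inr i => w.posDom i

/-- The process an element belongs to (a process belongs to itself; a position
to the process executing it).  Two elements are `∼`-equivalent iff they have
the same process. -/
def procOf (w : Exec) : Elem → Option ℕ
  | .inl p => some p
  | .inr i => (w.at? i).map Prod.snd

def letterOf (w : Exec) : Elem → Option ℕ
  | .inl _ => none
  | .inr i => (w.at? i).map Prod.fst

/-! ### First-order logic FO_A[∼,<,+1] -/

/-- Syntax of `FO_A[∼,<,+1]`; variables are naturals, letters are naturals. -/
inductive FO where
  | ptype : PType → ℕ → FO
  | letter : ℕ → ℕ → FO
  | eq : ℕ → ℕ → FO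
  | sim : ℕ → ℕ → FO
  | lt : ℕ → ℕ → FO
  | succ : ℕ → ℕ → FO
  | not : FO → FO
  | or : FO → FO → FO
  | ex : ℕ → FO → FO

/-- Satisfaction of a formula in the structure `S_(P,w)` under a valuation. -/
def Sat (P : ProcTriple) (w : Exec) : (ℕ → Elem) → FO → Prop
  | v, .ptype θ x => ∃ p, v x = Sum.inl p ∧ p ∈ P.ofType θ
  | v, .letter a x => letterOf w (v x) = some a
  | v, .eq x y => v x = v y
  | v, .sim x y => (procOf w (v x)).isSome ∧ procOf w (v x) = procOf w (v y)
  | v, .lt x y => ∃ i j, v x = Sum.inr i ∧ v y = Sum.inr j ∧ i < j ∧ w.posDom j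
  | v, .succ x y => ∃ i, v x = Sum.inr i ∧ v y = Sum.inr (i + 1) ∧ w.posDom (i + 1)
  | v, .not φ => ¬ Sat P w v φ
  | v, .or φ ψ => Sat P w v φ ∨ Sat P w v ψ
  | v, .ex x φ => ∃ u : Elem, elemDom P w u ∧ Sat P w (Function.update v x u) φ

/-- Satisfaction for sentences: `(P,w) ⊨ φ` (the valuation is irrelevant for sentences). -/
def SatS (P : ProcTriple) (w : Exec) (φ : FO) : Prop :=
  Sat P w (fun _ => Sum.inl 0) φ

def FO.free : FO → Finset ℕ
  | .ptype _ x => {x}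
  | .letter _ x => {x}
  | .eq x y => {x, y}
  | .sim x y => {x, y}
  | .lt x y => {x, y}
  | .succ x y => {x, y}
  | .not φ => φ.free
  | .or φ ψ => φ.free ∪ ψ.free
  | .ex x φ => φ.free.erase x

/-- A sentence has no free variables. -/
def FO.isSentence (φ : FO) : Prop := φ.free = ∅

def FO.vars : FO → Finset ℕ
  | .ptype _ x => {x}
  | .letter _ x => {x}
  | .eq x y => {x, y}
  | .sim x y => {x, y}
  | .lt x y => {x, y}
  | .succ x y => {x, y}
  | .not φ => φ.vars
  | .or φ ψ => φ.vars ∪ ψ.vars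
  | .ex x φ => insert x φ.vars

/-- The two-variable fragment: only the variable names `0` and `1` are used. -/
def FO.twoVar (φ : FO) : Prop := φ.vars ⊆ ({0, 1} : Finset ℕ)

/-- The fragment `FO_A[∼]`: neither `<` nor `+1` occurs. -/
def FO.onlySim : FO → Prop
  | .lt _ _ => False
  | .succ _ _ => False
  | .not φ => φ.onlySim
  | .or φ ψ => φ.onlySim ∧ ψ.onlySim
  | .ex _ φ => φ.onlySim
  | _ => True

/-! ### The asynchronous synthesis game and `Win(φ)` -/

/-- A `P`-strategy for System: `none` plays ε, `some σ` proposes the system event `σ`. -/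
abbrev Strategy := List Event → Option Event

/-- The strategy only proposes system events (its codomain is `Σ_s ∪ {ε}`). -/
def properStrategy (Alph : Alphabet) (P : ProcTriple) (f : Strategy) : Prop :=
  ∀ u σ, f u = some σ → isSysEvent Alph P σ

/-- The prefix of length `i` of an execution. -/
def Exec.pre : Exec → ℕ → List Event
  | .fin l, i => l.take i
  | .inf g, i => (List.range i).map g

/-- `w` is `f`-compatible: every system event of `w` is the one proposed by `f`. -/
def compatible (Alph : Alphabet) (P : ProcTriple) (f : Strategy) (w : Exec) : Prop :=
  ∀ i σ, w.at? i = some σ → isSysEvent Alph P σ → f (w.pre i) = some σ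

/-- `w` is `f`-fair. -/
def fair (Alph : Alphabet) (P : ProcTriple) (f : Strategy) : Exec → Prop
  | .fin l => f l = none
  | .inf g =>
      {i : ℕ | f (Exec.pre (Exec.inf g) i) ≠ none}.Infinite →
      {j : ℕ | isSysEvent Alph P (g j)}.Infinite

/-- `f` is `P`-winning for `φ`. -/
def winningStrategy (Alph : Alphabet) (P : ProcTriple) (φ : FO) (f : Strategy) : Prop :=
  properStrategy Alph P f ∧
  ∀ w : Exec, w.valid Alph P → compatible Alph P f w → fair Alph P f w → SatS P w φ

/-- Triples of naturals, indexed by the process types (s, e, se). -/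
abbrev Tok := ℕ × ℕ × ℕ

/-- `Win(φ)`: the set of triples `(k_s, k_e, k_se)` admitting a winning System strategy. -/
def WinFO (Alph : Alphabet) (φ : FO) : Set Tok :=
  { k | ∃ P : ProcTriple,
      P.Ps.card = k.1 ∧ P.Pe.card = k.2.1 ∧ P.Pse.card = k.2.2 ∧
      ∃ f : Strategy, winningStrategy Alph P φ f }

/-! ### Parameterized vector games -/

/-- Locations: `L = {0,…,B}^A`. -/
abbrev Loc (n B : ℕ) := Fin n → Fin (B + 1)

/-- A local acceptance condition: for each process type a pair `(⋈, n)`,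
where the Boolean `true` stands for `=` and `false` for `≥`. -/
abbrev LCond := (Bool × ℕ) × (Bool × ℕ) × (Bool × ℕ)

/-- Configurations: `C : L → ℕ^T`. -/
abbrev GConfig (n B : ℕ) := Loc n B → Tok

/-- Transitions: maps `L × L → ℕ^T`. -/
abbrev GTrans (n B : ℕ) := Loc n B → Loc n B → Tok

/-- A parameterized vector game `G = (A, B, F)`. -/
structure PVG where
  Alph : Alphabet
  B : ℕ
  F : List (Loc Alph.n B → LCond)

def cmpHolds (c : Bool × ℕ) (m : ℕ) : Prop := if c.1 then m = c.2 else c.2 ≤ m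

def lcondHolds (κ : LCond) (t : Tok) : Prop :=
  cmpHolds κ.1 t.1 ∧ cmpHolds κ.2.1 t.2.1 ∧ cmpHolds κ.2.2 t.2.2

/-- `C ⊨ F`. -/
def accept (G : PVG) (C : GConfig G.Alph.n G.B) : Prop :=
  ∃ κ ∈ G.F, ∀ ℓ, lcondHolds (κ ℓ) (C ℓ)

/-- `ℓ + a`: increase coordinate `a` by one, capped at `B`. -/
def locAdd {n B : ℕ} (ℓ : Loc n B) (a : ℕ) : Loc n B :=
  fun i =>
    if (i : ℕ) = a then ⟨min ((ℓ i : ℕ) + 1) B, Nat.lt_succ_of_le (min_le_right _ _)⟩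
    else ℓ i

/-- `ℓ + w` for a finite word `w` over the alphabet. -/
def locAddW {n B : ℕ} (ℓ : Loc n B) : List ℕ → Loc n B
  | [] => ℓ
  | a :: u => locAddW (locAdd ℓ a) u

def isSysWord (Alph : Alphabet) (u : List ℕ) : Prop :=
  ∀ a ∈ u, a < Alph.n ∧ Alph.sys a = true

def isEnvWord (Alph : Alphabet) (u : List ℕ) : Prop :=
  ∀ a ∈ u, a < Alph.n ∧ Alph.sys a = false

/-- System transitions: values in `ℕ × {0} × ℕ` and moves along system words. -/
def isSysTrans (G : PVG) (τ : GTrans G.Alph.n G.B) : Prop :=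
  ∀ ℓ ℓ', (τ ℓ ℓ').2.1 = 0 ∧
    (τ ℓ ℓ' ≠ ((0, 0, 0) : Tok) → ∃ u : List ℕ, isSysWord G.Alph u ∧ ℓ' = locAddW ℓ u)

/-- Environment transitions: values in `{0} × ℕ × ℕ` and moves along environment words. -/
def isEnvTrans (G : PVG) (τ : GTrans G.Alph.n G.B) : Prop :=
  ∀ ℓ ℓ', (τ ℓ ℓ').1 = 0 ∧
    (τ ℓ ℓ' ≠ ((0, 0, 0) : Tok) → ∃ u : List ℕ, isEnvWord G.Alph u ∧ ℓ' = locAddW ℓ u)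

def outm {n B : ℕ} (τ : GTrans n B) (ℓ : Loc n B) : Tok := ∑ ℓ' : Loc n B, τ ℓ ℓ'

def inm {n B : ℕ} (τ : GTrans n B) (ℓ : Loc n B) : Tok := ∑ ℓ' : Loc n B, τ ℓ' ℓ

/-- Componentwise order on `ℕ^T`. -/
def tokLe (s t : Tok) : Prop := s.1 ≤ t.1 ∧ s.2.1 ≤ t.2.1 ∧ s.2.2 ≤ t.2.2

def applicable {n B : ℕ} (τ : GTrans n B) (C : GConfig n B) : Prop :=
  ∀ ℓ, tokLe (outm τ ℓ) (C ℓ)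

/-- `τ(C)(ℓ) = C(ℓ) − out_τ(ℓ) + in_τ(ℓ)` (componentwise). -/
def applyT {n B : ℕ} (τ : GTrans n B) (C : GConfig n B) : GConfig n B :=
  fun ℓ => C ℓ - outm τ ℓ + inm τ ℓ

/-- The configuration reached from `C0` after applying the transitions `ts` in order. -/
def confAt {n B : ℕ} (C0 : GConfig n B) (ts : List (GTrans n B)) : GConfig n B :=
  ts.foldl (fun C τ => applyT τ C) C0

/-- A valid `C0`-play, represented by its list of transitions
(step `i`, 0-based, is System's if `i` is even, Environment's if `i` is odd). -/
def validPlay (G : PVG) (C0 : GConfig G.Alph.n G.B)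
    (ts : List (GTrans G.Alph.n G.B)) : Prop :=
  ∀ i (h : i < ts.length),
    applicable (ts.get ⟨i, h⟩) (confAt C0 (ts.take i)) ∧
    (i % 2 = 0 → isSysTrans G (ts.get ⟨i, h⟩) ∧ accept G (confAt C0 (ts.take (i + 1)))) ∧
    (i % 2 = 1 → isEnvTrans G (ts.get ⟨i, h⟩) ∧ ¬ accept G (confAt C0 (ts.take (i + 1))))

/-- A strategy for System in the game: a partial map from plays to transitions. -/
abbrev GStrat (n B : ℕ) := List (GTrans n B) → Option (GTrans n B)

/-- `f(C)` is defined, and whenever `f(π) = τ` for a valid play π ending in `C_i`,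
`τ` is a system transition, applicable at `C_i`, and `τ(C_i) ⊨ F`. -/
def properGStrat (G : PVG) (C0 : GConfig G.Alph.n G.B) (f : GStrat G.Alph.n G.B) : Prop :=
  (f []).isSome ∧
  ∀ ts τ, validPlay G C0 ts → f ts = some τ →
    isSysTrans G τ ∧ applicable τ (confAt C0 ts) ∧ accept G (applyT τ (confAt C0 ts))

def gCompatible {n B : ℕ} (f : GStrat n B) (ts : List (GTrans n B)) : Prop :=
  ∀ i (h : i < ts.length), i % 2 = 0 → f (ts.take i) = some (ts.get ⟨i, h⟩)

def gMaximal (G : PVG) (C0 : GConfig G.Alph.n G.B) (f : GStrat G.Alph.n G.B)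
    (ts : List (GTrans G.Alph.n G.B)) : Prop :=
  ¬ ∃ ts', ts <+: ts' ∧ ts ≠ ts' ∧ validPlay G C0 ts' ∧ gCompatible f ts'

def winningGStrat (G : PVG) (C0 : GConfig G.Alph.n G.B) (f : GStrat G.Alph.n G.B) : Prop :=
  properGStrat G C0 f ∧
  ∀ ts, validPlay G C0 ts → gCompatible f ts → gMaximal G C0 f ts →
    accept G (confAt C0 ts)

/-- A configuration is winning for System if System has a winning strategy from it. -/
def winningConf (G : PVG) (C0 : GConfig G.Alph.n G.B) : Prop :=
  ∃ f, winningGStrat G C0 f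

/-- The all-zero location `ℓ_0`. -/
def loc0 (n B : ℕ) : Loc n B := fun _ => 0

/-- `C_k⃗`: all `k⃗` tokens on `ℓ_0`. -/
def initConfig {n B : ℕ} (k : Tok) : GConfig n B :=
  Function.update (fun _ => ((0, 0, 0) : Tok)) (loc0 n B) k

/-- `Win(G)`. -/
def WinG (G : PVG) : Set Tok :=
  { k | winningConf G (initConfig k) }

/-! ### Environment chains and constants of a game -/

/-- `C <_e C'`. -/
def envStep (G : PVG) (C C' : GConfig G.Alph.n G.B) : Prop :=
  C ≠ C' ∧ ∃ τ, isEnvTrans G τ ∧ applicable τ C ∧ C' = applyT τ C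

/-- There is a chain `C = C_0 <_e C_1 <_e … <_e C_d`. -/
def hasChain (G : PVG) (C : GConfig G.Alph.n G.B) (d : ℕ) : Prop :=
  ∃ cs : ℕ → GConfig G.Alph.n G.B, cs 0 = C ∧ ∀ i < d, envStep G (cs i) (cs (i + 1))

/-- `C ∈ Conf_d`: the longest `<_e`-chain starting in `C` has length exactly `d`. -/
def ConfD (G : PVG) (C : GConfig G.Alph.n G.B) (d : ℕ) : Prop :=
  hasChain G C d ∧ ¬ hasChain G C (d + 1)

def lcondMax (κ : LCond) : ℕ := max κ.1.2 (max κ.2.1.2 κ.2.2.2)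

/-- `K`: the largest constant occurring in the acceptance condition `F`. -/
def maxConst (G : PVG) : ℕ :=
  (G.F.map fun κ => Finset.univ.sup fun ℓ : Loc G.Alph.n G.B => lcondMax (κ ℓ)).foldr max 0

/-- `|A_e|`: the number of environment letters. -/
def envCard (Alph : Alphabet) : ℕ :=
  ((Finset.range Alph.n).filter fun a => Alph.sys a = false).card

/-- `|L| = (B+1)^|A|`. -/
def numLoc (G : PVG) : ℕ := (G.B + 1) ^ G.Alph.n

/-! ### Cutoffs -/

/-- `k⃗_0` is a cutoff of `W` with respect to `(N_s, N_e, N_se)`. -/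
def IsCutoff (Ns Ne Nse : Set ℕ) (W : Set Tok) (k0 : Tok) : Prop :=
  k0.1 ∈ Ns ∧ k0.2.1 ∈ Ne ∧ k0.2.2 ∈ Nse ∧
  ((∀ k : Tok, k.1 ∈ Ns → k.2.1 ∈ Ne → k.2.2 ∈ Nse →
      k0.1 ≤ k.1 → k0.2.1 ≤ k.2.1 → k0.2.2 ≤ k.2.2 → k ∈ W) ∨
   (∀ k : Tok, k.1 ∈ Ns → k.2.1 ∈ Ne → k.2.2 ∈ Nse →
      k0.1 ≤ k.1 → k0.2.1 ≤ k.2.1 → k0.2.2 ≤ k.2.2 → k ∉ W))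

/-! ### Counting formulas and the normal form for FO[∼] -/

def FO.and (φ ψ : FO) : FO := FO.not (FO.or (FO.not φ) (FO.not ψ))

def FO.imp (φ ψ : FO) : FO := FO.or (FO.not φ) ψ

def FO.iff (φ ψ : FO) : FO := FO.and (φ.imp ψ) (ψ.imp φ)

def FO.all (x : ℕ) (φ : FO) : FO := FO.not (FO.ex x (FO.not φ))

def trueFO : FO := FO.eq 0 0

def bigAnd (l : List FO) : FO := l.foldr FO.and trueFO

def bigOr (l : List FO) : FO := l.foldr FO.or (FO.not trueFO)

/-- `∃^{≥m} y. (mk y)`: there are at least `m` distinct witnesses; the witness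
variables are `base, base+1, …, base+m-1`. -/
def exGe (m base : ℕ) (mk : ℕ → FO) : FO :=
  let distinct : List FO :=
    (List.range m).flatMap fun i =>
      ((List.range m).filter fun j => decide (i < j)).map fun j =>
        FO.not (FO.eq (base + i) (base + j))
  let body : FO :=
    FO.and (bigAnd distinct) (bigAnd ((List.range m).map fun i => mk (base + i)))
  ((List.range m).map (base + ·)).foldr FO.ex body

/-- `∃^{=m} y. (mk y) := ∃^{≥m} y. (mk y) ∧ ¬ ∃^{≥m+1} y. (mk y)`. -/
def exEq (m base : ℕ) (mk : ℕ → FO) : FO :=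
  FO.and (exGe m base mk) (FO.not (exGe (m + 1) base mk))

/-- `ψ_{B,ℓ}(y)`: in the class of `y`, each letter `a` occurs exactly `ℓ(a)` times
if `ℓ(a) < B`, and at least `ℓ(a)` times if `ℓ(a) = B`. -/
def psiCount (n B : ℕ) (ℓ : ℕ → ℕ) (y : ℕ) : FO :=
  bigAnd ((List.range n).map fun a =>
    if ℓ a < B then
      exEq (ℓ a) (y + 1) (fun z => FO.and (FO.sim y z) (FO.letter a z))
    else
      exGe (ℓ a) (y + 1) (fun z => FO.and (FO.sim y z) (FO.letter a z)))

/-- `∃^{⋈m} y. (θ(y) ∧ ψ_{B,ℓ}(y))`, where `⋈` is `=` if `isEq` and `≥` otherwise. -/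
def nfAtom (n B : ℕ) (isEq : Bool) (m : ℕ) (θ : PType) (ℓ : ℕ → ℕ) : FO :=
  let mk : ℕ → FO := fun y => FO.and (FO.ptype θ y) (psiCount n B ℓ y)
  if isEq then exEq m 0 mk else exGe m 0 mk

/-! ### The normalized synthesis problem -/

/-- A normalized strategy: maps finite executions to finite system words. -/
abbrev NormStrategy := List Event → Option (List Event)

/-- A normalized `P`-execution, given by its block decomposition `bs`
(`bs[j]` with `j` even is a System block, `j` odd an Environment block;
this corresponds to the 1-based indexing `w = w_1 … w_n` of the paper). -/
def NormExec (Alph : Alphabet) (P : ProcTriple) (φ : FO) (bs : List (List Event)) : Prop :=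
  1 ≤ bs.length ∧
  ∀ j (h : j < bs.length),
    (j % 2 = 0 → (∀ σ ∈ bs.get ⟨j, h⟩, isSysEvent Alph P σ) ∧
        SatS P (Exec.fin ((bs.take (j + 1)).flatten)) φ) ∧
    (j % 2 = 1 → (∀ σ ∈ bs.get ⟨j, h⟩, isEnvEvent Alph P σ) ∧
        ¬ SatS P (Exec.fin ((bs.take (j + 1)).flatten)) φ)

/-- Properness of a normalized strategy: `f(ε)` is defined, outputs are system
words, and `(P, w · f(w)) ⊨ φ` whenever `f(w)` is defined. -/
def properNStrat (Alph : Alphabet) (P : ProcTriple) (φ : FO) (f : NormStrategy) : Prop :=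
  (f []).isSome ∧
  ∀ w u, f w = some u →
    (∀ σ ∈ u, isSysEvent Alph P σ) ∧ SatS P (Exec.fin (w ++ u)) φ

def nCompatible (f : NormStrategy) (bs : List (List Event)) : Prop :=
  ∀ j (h : j < bs.length), j % 2 = 0 → f ((bs.take j).flatten) = some (bs.get ⟨j, h⟩)

def nMaximal (Alph : Alphabet) (P : ProcTriple) (φ : FO) (f : NormStrategy)
    (bs : List (List Event)) : Prop :=
  ¬ ∃ bs', bs <+: bs' ∧ bs ≠ bs' ∧ NormExec Alph P φ bs' ∧ nCompatible f bs'

def winningNStrategy (Alph : Alphabet) (P : ProcTriple) (φ : FO) (f : NormStrategy) : Prop :=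
  properNStrat Alph P φ f ∧
  ∀ bs, NormExec Alph P φ bs → nCompatible f bs → nMaximal Alph P φ f bs →
    SatS P (Exec.fin bs.flatten) φ

/-- `NWin(φ)`. -/
def NWin (Alph : Alphabet) (φ : FO) : Set Tok :=
  { k | ∃ P : ProcTriple,
      P.Ps.card = k.1 ∧ P.Pe.card = k.2.1 ∧ P.Pse.card = k.2.2 ∧
      ∃ f : NormStrategy, winningNStrategy Alph P φ f }

/-! ### Concrete alphabet and formulas of the examples -/

/-- The alphabet with `A_s = {a, b} = {0, 1}` and `A_e = {c, d} = {2, 3}`. -/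
def alph4 : Alphabet := ⟨4, fun a => decide (a < 2)⟩

/-- `φ_1 = ∀x.((s(x) ∨ se(x)) → ∃y.(x∼y ∧ (a(y) ∨ b(y))))`. -/
def phi1 : FO :=
  FO.all 0 (FO.imp (FO.or (FO.ptype .s 0) (FO.ptype .se 0))
    (FO.ex 1 (FO.and (FO.sim 0 1) (FO.or (FO.letter 0 1) (FO.letter 1 1)))))

/-- `φ_4 = ∀x.((∃^{=2}y.(x∼y ∧ a(y))) ↔ (∃^{=2}y.(x∼y ∧ d(y))))`. -/
def phi4 : FO :=
  FO.all 0 (FO.iff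
    (exEq 2 1 fun y => FO.and (FO.sim 0 y) (FO.letter 0 y))
    (exEq 2 1 fun y => FO.and (FO.sim 0 y) (FO.letter 3 y)))

/-- Vectors `{0,…,3}^{4}` as functions `ℕ → ℕ`. -/
def vec4 (v0 v1 v2 v3 : ℕ) : ℕ → ℕ := fun i => [v0, v1, v2, v3].getD i 0

def allVecs4 : List (ℕ → ℕ) :=
  (List.range 4).flatMap fun v0 =>
    (List.range 4).flatMap fun v1 =>
      (List.range 4).flatMap fun v2 =>
        (List.range 4).map fun v3 => vec4 v0 v1 v2 v3

/-- `Z`: vectors with `ℓ(a) = 2 ≠ ℓ(d)` or `ℓ(d) = 2 ≠ ℓ(a)` (letters `a = 0`, `d = 3`). -/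
def Zvecs : List (ℕ → ℕ) :=
  allVecs4.filter fun ℓ => decide ((ℓ 0 = 2 ∧ ℓ 3 ≠ 2) ∨ (ℓ 3 = 2 ∧ ℓ 0 ≠ 2))

/-- `φ_4' = ⋀_{θ ∈ T, ℓ ∈ Z} ∃^{=0} y.(θ(y) ∧ ψ_{3,ℓ}(y))`. -/
def phi4' : FO :=
  bigAnd (([PType.s, PType.e, PType.se].flatMap fun θ =>
    Zvecs.map fun ℓ => nfAtom 4 3 true 0 θ ℓ))

/-! ### Effective encodings of inputs (for decidability statements) -/

def decodePType (k : ℕ) : PType :=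
  if k % 3 = 0 then .s else if k % 3 = 1 then .e else .se

/-- Surjective decoding of formulas from naturals (with fuel). -/
def decodeFOAux : ℕ → ℕ → FO
  | 0, _ => FO.eq 0 0
  | fuel + 1, c =>
    let t := c % 9
    let m := c / 9
    let a := m.unpair.1
    let b := m.unpair.2
    if t = 0 then FO.ptype (decodePType a) b
    else if t = 1 then FO.letter a b
    else if t = 2 then FO.eq a b
    else if t = 3 then FO.sim a b
    else if t = 4 then FO.lt a b
    else if t = 5 then FO.succ a b
    else if t = 6 then FO.not (decodeFOAux fuel m)
    else if t = 7 then FO.or (decodeFOAux fuel a) (decodeFOAux fuel b)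
    else FO.ex a (decodeFOAux fuel b)

def decodeFO (c : ℕ) : FO := decodeFOAux c c

/-- Decoding an input of the synthesis/satisfiability problems: an alphabet
(size and partition) together with a formula. -/
def decodeFOInput (c : ℕ) : Alphabet × FO :=
  (⟨c.unpair.1.unpair.1, fun a => (c.unpair.1.unpair.2).testBit a⟩, decodeFO c.unpair.2)

def decodeBN (m : ℕ) : Bool × ℕ := (decide (m % 2 = 0), m / 2)

def decodeLCond (m : ℕ) : LCond :=
  (decodeBN m.unpair.1, decodeBN m.unpair.2.unpair.1, decodeBN m.unpair.2.unpair.2)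

/-- An explicit index of a location, used to decode local acceptance conditions. -/
def locIndex {n B : ℕ} (ℓ : Loc n B) : ℕ := ∑ i : Fin n, (ℓ i : ℕ) * (B + 1) ^ (i : ℕ)

/-- Decoding a parameterized vector game from a natural number. -/
def decodeGame (c : ℕ) : PVG :=
  let n := c.unpair.1.unpair.1
  let sy := c.unpair.1.unpair.2
  let B := c.unpair.2.unpair.1
  let Fc := c.unpair.2.unpair.2
  { Alph := ⟨n, fun a => sy.testBit a⟩
    B := B
    F := (Denumerable.ofNat (List ℕ) Fc).map fun kc =>
      fun ℓ => decodeLCond ((Denumerable.ofNat (List ℕ) kc).getD (locIndex ℓ) 0) }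

/-! Both sentences only speak about the numbers of `a`s and `d`s in `∼`-classes, and in a
`P`-execution every `∼`-class is the class of a process. So `φ_4` says that in every process
class, `#a = 2 ↔ #d = 2`. The atom `∃^{=0} y.(θ(y) ∧ ψ_{3,ℓ}(y))` forbids `θ`-processes whose
letter counts, capped at `3`, form the vector `ℓ`; capping at `3` does not change whether a count
equals `2`, so `Z` consists exactly of the capped count vectors violating that equivalence. -/

theorem _root_.Set.natCast_le_encard_iff_exists_injOn {α : Type*} [Nonempty α] {S : Set α}
    {m : ℕ} :
    (m : ℕ∞) ≤ S.encard ↔ ∃ g : ℕ → α, Set.MapsTo g {i | i < m} S ∧ Set.InjOn g {i | i < m} := by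
  constructor
  · intro h
    rw [← Set.Nat.encard_range m] at h
    exact (Set.finite_lt_nat m).exists_injOn_of_encard_le h
  · rintro ⟨g, hmaps, hinj⟩
    exact (Set.Nat.encard_range m).symm.trans_le (Set.encard_le_encard_of_injOn hmaps hinj)

theorem _root_.ENat.ite_lt_iff_min_eq {c : ℕ∞} {m B : ℕ} (hm : m ≤ B) :
    (if m < B then c = m else (m : ℕ∞) ≤ c) ↔ min c B = m := by
  induction c using ENat.recTopCoe with
  | top => split_ifs <;> simp <;> omega
  | coe n =>
    rw [← (Nat.mono_cast (α := ℕ∞)).map_min, Nat.cast_inj, Nat.cast_inj, Nat.cast_le]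
    split_ifs <;> omega

theorem _root_.ENat.min_eq_natCast_iff_of_lt {c : ℕ∞} {m B : ℕ} (h : m < B) :
    min c B = m ↔ c = m := by
  simpa [h] using (ENat.ite_lt_iff_min_eq (c := c) h.le).symm

theorem ProcTriple.mem_all_iff {P : ProcTriple} {p : ℕ} :
    p ∈ P.all ↔ ∃ θ ∈ [PType.s, .e, .se], p ∈ P.ofType θ := by
  simp [ProcTriple.all, ProcTriple.ofType]

theorem ProcTriple.mem_all_of_mem_ofType {P : ProcTriple} {θ : PType} {p : ℕ}
    (hp : p ∈ P.ofType θ) : p ∈ P.all :=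
  ProcTriple.mem_all_iff.2 ⟨θ, by cases θ <;> simp, hp⟩

theorem Exec.exists_at?_of_posDom {Alph : Alphabet} {P : ProcTriple} {w : Exec}
    (hw : w.valid Alph P) {i : ℕ} (hi : w.posDom i) :
    ∃ σ, w.at? i = some σ ∧ isEvent Alph P σ := by
  cases w with
  | fin l => exact ⟨l[i]'hi, List.getElem?_eq_getElem hi, hw _ (List.getElem_mem hi)⟩
  | inf g => exact ⟨g i, rfl, hw i⟩

theorem isEvent.snd_mem_all {Alph : Alphabet} {P : ProcTriple} {σ : Event}
    (hσ : isEvent Alph P σ) : σ.2 ∈ P.all := by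
  simp only [ProcTriple.all, Finset.mem_union]
  rcases hσ with ⟨-, -, h⟩ | ⟨-, -, h⟩ <;> tauto

theorem exists_procOf_eq_of_elemDom {Alph : Alphabet} {P : ProcTriple} {w : Exec}
    (hw : w.valid Alph P) {u : Elem} (hu : elemDom P w u) :
    ∃ p ∈ P.all, procOf w u = some p := by
  cases u with
  | inl p => exact ⟨p, hu, rfl⟩
  | inr i =>
    obtain ⟨σ, hσ, hevent⟩ := Exec.exists_at?_of_posDom hw hu
    exact ⟨σ.2, hevent.snd_mem_all, by simp [procOf, hσ]⟩

def assignBlock (v : ℕ → Elem) (base m : ℕ) (g : ℕ → Elem) : ℕ → Elem :=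
  fun j => if base ≤ j ∧ j < base + m then g (j - base) else v j

section AssignBlock

variable (v : ℕ → Elem) (base m : ℕ) (g : ℕ → Elem)

theorem assignBlock_zero : assignBlock v base 0 g = v := by
  funext j; simp only [assignBlock]; split_ifs <;> first | rfl | omega

theorem assignBlock_succ :
    assignBlock v base (m + 1) g = Function.update (assignBlock v base m g) (base + m) (g m) := by
  funext j
  simp only [assignBlock, Function.update_apply]
  split_ifs <;> first | rfl | (congr 1; omega)

theorem assignBlock_of_lt {j : ℕ} (hj : j < base) : assignBlock v base m g j = v j := by
  simp only [assignBlock]; split_ifs <;> first | rfl | omega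

theorem assignBlock_add {i : ℕ} (hi : i < m) : assignBlock v base m g (base + i) = g i := by
  rw [assignBlock, if_pos (by omega), Nat.add_sub_cancel_left]

theorem assignBlock_congr {g' : ℕ → Elem} (h : ∀ i < m, g i = g' i) :
    assignBlock v base m g = assignBlock v base m g' := by
  funext j; simp only [assignBlock]; split_ifs <;> first | rfl | (apply h; omega)

end AssignBlock

theorem sat_foldr_ex {P : ProcTriple} {w : Exec} (base m : ℕ) (φ : FO) (v : ℕ → Elem) :
    Sat P w v (((List.range m).map (base + ·)).foldr FO.ex φ) ↔
      ∃ g : ℕ → Elem, (∀ i < m, elemDom P w (g i)) ∧ Sat P w (assignBlock v base m g) φ := by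
  induction m generalizing φ with
  | zero =>
    simp only [List.range_zero, List.map_nil, List.foldr_nil, assignBlock_zero]
    exact ⟨fun h => ⟨fun _ => .inl 0, by omega, h⟩, fun ⟨_, _, h⟩ => h⟩
  | succ m ih =>
    rw [List.range_succ, List.map_append, List.foldr_append]
    simp only [List.map_cons, List.map_nil, List.foldr_cons, List.foldr_nil]
    rw [ih]
    constructor
    · rintro ⟨g, hg, u, hu, hsat⟩
      refine ⟨Function.update g m u, fun i hi => ?_, ?_⟩
      · rcases eq_or_ne i m with rfl | hne
        · simpa using hu
        · rw [Function.update_of_ne hne]; exact hg i (by omega)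
      · rwa [assignBlock_succ, Function.update_self,
          assignBlock_congr v base m _ fun i hi => Function.update_of_ne (Nat.ne_of_lt hi) u g]
    · rintro ⟨g, hg, hsat⟩
      exact ⟨g, fun i hi => hg i (by omega), g m, hg m (by omega), by rwa [← assignBlock_succ]⟩

section Semantics

variable {P : ProcTriple} {w : Exec} {v : ℕ → Elem}

theorem sat_not {φ : FO} : Sat P w v (FO.not φ) ↔ ¬ Sat P w v φ := Iff.rfl

theorem sat_or {φ ψ : FO} : Sat P w v (FO.or φ ψ) ↔ Sat P w v φ ∨ Sat P w v ψ := Iff.rfl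

theorem sat_and {φ ψ : FO} : Sat P w v (FO.and φ ψ) ↔ Sat P w v φ ∧ Sat P w v ψ := by
  simp only [FO.and, sat_not, sat_or, not_or, not_not]

theorem sat_iff {φ ψ : FO} : Sat P w v (FO.iff φ ψ) ↔ (Sat P w v φ ↔ Sat P w v ψ) := by
  simp only [FO.iff, FO.imp, sat_and, sat_or, sat_not]
  tauto

theorem sat_all {x : ℕ} {φ : FO} :
    Sat P w v (FO.all x φ) ↔ ∀ u, elemDom P w u → Sat P w (Function.update v x u) φ := by
  simp [FO.all, Sat]

theorem sat_bigAnd {l : List FO} : Sat P w v (bigAnd l) ↔ ∀ φ ∈ l, Sat P w v φ := by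
  induction l with
  | nil => exact iff_of_true rfl (by simp)
  | cons φ l ih => rw [bigAnd, List.foldr_cons, sat_and, ← bigAnd, ih, List.forall_mem_cons]

/-- The witness variables of `exGe m base mk` are `base, base + 1, …`, so `mk` may only use
parameters below `base`. -/
def Expresses (P : ProcTriple) (w : Exec) (v : ℕ → Elem) (base : ℕ) (mk : ℕ → FO)
    (Q : Elem → Prop) : Prop :=
  ∀ (v' : ℕ → Elem) k, base ≤ k → (∀ j < base, v' j = v j) → (Sat P w v' (mk k) ↔ Q (v' k))

variable {base : ℕ} {mk : ℕ → FO} {Q : Elem → Prop}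

theorem sat_exGe (H : Expresses P w v base mk Q) (m : ℕ) :
    Sat P w v (exGe m base mk) ↔ (m : ℕ∞) ≤ {z | elemDom P w z ∧ Q z}.encard := by
  rw [Set.natCast_le_encard_iff_exists_injOn, exGe, sat_foldr_ex]
  refine exists_congr fun g => ?_
  have hQ : ∀ i < m, Sat P w (assignBlock v base m g) (mk (base + i)) ↔ Q (g i) := fun i hi => by
    rw [H _ _ (Nat.le_add_right _ _) fun j hj => assignBlock_of_lt v base m g hj,
      assignBlock_add v base m g hi]
  have hdistinct : (∀ i < m, ∀ j < m, i < j →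
      ¬ Sat P w (assignBlock v base m g) (FO.eq (base + i) (base + j))) ↔
      Set.InjOn g {i | i < m} := by
    simp only [Sat]
    constructor
    · intro h i hi j hj hij
      by_contra hne
      rcases Nat.lt_or_gt_of_ne hne with hlt | hlt
      · exact h i hi j hj hlt (by rw [assignBlock_add _ _ _ _ hi, assignBlock_add _ _ _ _ hj, hij])
      · exact h j hj i hi hlt (by rw [assignBlock_add _ _ _ _ hi, assignBlock_add _ _ _ _ hj, hij])
    · intro h i hi j hj hij heq
      rw [assignBlock_add _ _ _ _ hi, assignBlock_add _ _ _ _ hj] at heq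
      exact hij.ne (h hi hj heq)
  simp only [sat_and, sat_bigAnd, List.forall_mem_flatMap, List.forall_mem_map,
    List.forall_mem_filter, List.mem_range, decide_eq_true_eq, sat_not, hdistinct]
  constructor
  · rintro ⟨hdom, hinj, hmk⟩
    exact ⟨fun i hi => ⟨hdom i hi, (hQ i hi).1 (hmk i hi)⟩, hinj⟩
  · rintro ⟨hmaps, hinj⟩
    exact ⟨fun i hi => (hmaps hi).1, hinj, fun i hi => (hQ i hi).2 (hmaps hi).2⟩

theorem sat_exEq (H : Expresses P w v base mk Q) (m : ℕ) :
    Sat P w v (exEq m base mk) ↔ {z | elemDom P w z ∧ Q z}.encard = m := by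
  rw [exEq, sat_and, sat_not, sat_exGe H, sat_exGe H, Nat.cast_succ,
    ENat.add_one_le_iff (ENat.natCast_ne_top m), not_lt, le_antisymm_iff, and_comm]

end Semantics

/-- The number of positions labelled `a` in the `∼`-class of `u`. -/
noncomputable def classCount (P : ProcTriple) (w : Exec) (u : Elem) (a : ℕ) : ℕ∞ :=
  {z | elemDom P w z ∧ ((procOf w u).isSome ∧ procOf w u = procOf w z) ∧
    letterOf w z = some a}.encard

theorem classCount_congr {P : ProcTriple} {w : Exec} {u u' : Elem}
    (h : procOf w u = procOf w u') : classCount P w u = classCount P w u' := by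
  unfold classCount; rw [h]

theorem expresses_sim_letter (P : ProcTriple) (w : Exec) (v : ℕ → Elem) {y base : ℕ}
    (hy : y < base) (a : ℕ) :
    Expresses P w v base (fun z => FO.and (FO.sim y z) (FO.letter a z))
      (fun z => ((procOf w (v y)).isSome ∧ procOf w (v y) = procOf w z) ∧
        letterOf w z = some a) := by
  intro v' k _ hv'
  simp only [sat_and, Sat, hv' y hy]

/-- `ψ_{B,ℓ}(u)`, semantically. -/
def HasCountProfile (P : ProcTriple) (w : Exec) (n B : ℕ) (ℓ : ℕ → ℕ) (u : Elem) : Prop :=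
  ∀ a < n, if ℓ a < B then classCount P w u a = ℓ a else (ℓ a : ℕ∞) ≤ classCount P w u a

theorem sat_psiCount (P : ProcTriple) (w : Exec) (v : ℕ → Elem) (n B : ℕ) (ℓ : ℕ → ℕ) (y : ℕ) :
    Sat P w v (psiCount n B ℓ y) ↔ HasCountProfile P w n B ℓ (v y) := by
  simp only [psiCount, sat_bigAnd, List.forall_mem_map, List.mem_range, HasCountProfile]
  refine forall₂_congr fun a _ => ?_
  have H := expresses_sim_letter P w v (Nat.lt_succ_self y) a
  split_ifs
  · exact sat_exEq H _
  · exact sat_exGe H _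

theorem sat_nfAtom (P : ProcTriple) (w : Exec) (v : ℕ → Elem) (n B : ℕ) (isEq : Bool) (m : ℕ)
    (θ : PType) (ℓ : ℕ → ℕ) :
    Sat P w v (nfAtom n B isEq m θ ℓ) ↔
      let S := {u | elemDom P w u ∧ (∃ p, u = .inl p ∧ p ∈ P.ofType θ) ∧
        HasCountProfile P w n B ℓ u}
      if isEq then S.encard = m else (m : ℕ∞) ≤ S.encard := by
  have H : Expresses P w v 0 (fun y => FO.and (FO.ptype θ y) (psiCount n B ℓ y))
      (fun u => (∃ p, u = .inl p ∧ p ∈ P.ofType θ) ∧ HasCountProfile P w n B ℓ u) :=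
    fun v' k _ _ => by rw [sat_and, sat_psiCount]; rfl
  cases isEq
  · exact sat_exGe H m
  · exact sat_exEq H m

theorem sat_nfAtom_eq_zero (P : ProcTriple) (w : Exec) (v : ℕ → Elem) (n B : ℕ) (θ : PType)
    (ℓ : ℕ → ℕ) :
    Sat P w v (nfAtom n B true 0 θ ℓ) ↔ ∀ p ∈ P.ofType θ, ¬ HasCountProfile P w n B ℓ (.inl p) := by
  simp only [sat_nfAtom, if_true, Nat.cast_zero, Set.encard_eq_zero, Set.eq_empty_iff_forall_notMem]
  constructor
  · intro h p hp hprof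
    exact h (.inl p) ⟨ProcTriple.mem_all_of_mem_ofType hp, ⟨p, rfl, hp⟩, hprof⟩
  · rintro h _ ⟨-, ⟨p, rfl, hp⟩, hprof⟩
    exact h p hp hprof

theorem sat_phi4 (P : ProcTriple) (w : Exec) (v : ℕ → Elem) :
    Sat P w v phi4 ↔
      ∀ u, elemDom P w u → (classCount P w u 0 = 2 ↔ classCount P w u 3 = 2) := by
  rw [phi4, sat_all]
  refine forall₂_congr fun u _ => ?_
  rw [sat_iff, sat_exEq (expresses_sim_letter P w _ zero_lt_one 0),
    sat_exEq (expresses_sim_letter P w _ zero_lt_one 3), Function.update_self]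
  rfl

theorem hasCountProfile_iff_min_eq {P : ProcTriple} {w : Exec} {n B : ℕ} {ℓ : ℕ → ℕ} {u : Elem}
    (hℓ : ∀ a, ℓ a ≤ B) :
    HasCountProfile P w n B ℓ u ↔ ∀ a < n, min (classCount P w u a) B = ℓ a :=
  forall₂_congr fun a _ => ENat.ite_lt_iff_min_eq (hℓ a)

theorem mem_Zvecs_iff {ℓ : ℕ → ℕ} :
    ℓ ∈ Zvecs ↔ (∃ v0 < 4, ∃ v1 < 4, ∃ v2 < 4, ∃ v3 < 4, vec4 v0 v1 v2 v3 = ℓ) ∧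
      (ℓ 0 = 2 ∧ ℓ 3 ≠ 2 ∨ ℓ 3 = 2 ∧ ℓ 0 ≠ 2) := by
  simp [Zvecs, allVecs4]

theorem le_three_of_mem_Zvecs {ℓ : ℕ → ℕ} (hℓ : ℓ ∈ Zvecs) (a : ℕ) : ℓ a ≤ 3 := by
  obtain ⟨⟨v0, h0, v1, h1, v2, h2, v3, h3, rfl⟩, -⟩ := mem_Zvecs_iff.1 hℓ
  rcases a with _ | _ | _ | _ | a <;> simp [vec4] <;> omega

theorem exists_mem_Zvecs_min_eq_iff (c : ℕ → ℕ∞) :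
    (∃ ℓ ∈ Zvecs, ∀ a < 4, min (c a) 3 = ℓ a) ↔ ¬(c 0 = 2 ↔ c 3 = 2) := by
  have eq_two_iff : ∀ {a m : ℕ}, min (c a) 3 = m → (c a = 2 ↔ m = 2) := fun {a m} h => by
    have key := ENat.min_eq_natCast_iff_of_lt (c := c a) (show 2 < 3 by norm_num)
    rw [Nat.cast_ofNat, Nat.cast_ofNat, h] at key
    exact_mod_cast key.symm
  constructor
  · rintro ⟨ℓ, hℓ, hmin⟩
    rw [eq_two_iff (hmin 0 (by norm_num)), eq_two_iff (hmin 3 (by norm_num))]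
    have := (mem_Zvecs_iff.1 hℓ).2
    tauto
  · intro hne
    set cap : ℕ → ℕ := fun a => (min (c a) 3).toNat
    have hcap : ∀ a, min (c a) 3 = cap a := fun a =>
      (ENat.natCast_toNat (ne_top_of_le_ne_top (by decide) (min_le_right _ _))).symm
    have hcap_lt : ∀ a, cap a < 4 := fun a => by
      have := (hcap a).symm.trans_le (min_le_right _ _)
      exact Nat.lt_succ_of_le (by exact_mod_cast this)
    refine ⟨vec4 (cap 0) (cap 1) (cap 2) (cap 3), mem_Zvecs_iff.2 ⟨⟨_, hcap_lt 0, _, hcap_lt 1,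
      _, hcap_lt 2, _, hcap_lt 3, rfl⟩, ?_⟩, fun a ha => ?_⟩
    · rw [eq_two_iff (hcap 0), eq_two_iff (hcap 3)] at hne
      exact (by tauto : cap 0 = 2 ∧ cap 3 ≠ 2 ∨ cap 3 = 2 ∧ cap 0 ≠ 2)
    · interval_cases a <;> exact hcap _

theorem sat_phi4' (P : ProcTriple) (w : Exec) (v : ℕ → Elem) :
    Sat P w v phi4' ↔
      ∀ p ∈ P.all, (classCount P w (.inl p) 0 = 2 ↔ classCount P w (.inl p) 3 = 2) := by
  have unbalanced_iff : ∀ p, (∃ ℓ ∈ Zvecs, HasCountProfile P w 4 3 ℓ (.inl p)) ↔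
      ¬(classCount P w (.inl p) 0 = 2 ↔ classCount P w (.inl p) 3 = 2) := fun p => by
    rw [← exists_mem_Zvecs_min_eq_iff]
    exact exists_congr fun ℓ =>
      and_congr_right fun hℓ => hasCountProfile_iff_min_eq (le_three_of_mem_Zvecs hℓ)
  simp only [phi4', sat_bigAnd, List.forall_mem_flatMap, List.forall_mem_map, sat_nfAtom_eq_zero]
  constructor
  · intro h p hp
    obtain ⟨θ, hθ, hpθ⟩ := ProcTriple.mem_all_iff.1 hp
    by_contra hne
    obtain ⟨ℓ, hℓ, hprof⟩ := (unbalanced_iff p).2 hne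
    exact h θ hθ ℓ hℓ p hpθ hprof
  · intro h θ _ ℓ hℓ p hpθ hprof
    exact (unbalanced_iff p).1 ⟨ℓ, hℓ, hprof⟩ (h p (ProcTriple.mem_all_of_mem_ofType hpθ))

/-- Normal-form instance: over the alphabet `A_s = {a,b}`,
`A_e = {c,d}`, the sentence `φ_4` is equivalent, over all pairs `(P, w)`, to
`φ_4' = ⋀_{θ ∈ T, ℓ ∈ Z} ∃^{=0} y.(θ(y) ∧ ψ_{3,ℓ}(y))`. -/
theorem phi4_normal_form (P : ProcTriple) (w : Exec) (hw : w.valid alph4 P) :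
    SatS P w phi4 ↔ SatS P w phi4' := by
  rw [SatS, SatS, sat_phi4, sat_phi4']
  refine ⟨fun h p hp => h (.inl p) hp, fun h u hu => ?_⟩
  obtain ⟨p, hp, hup⟩ := exists_procOf_eq_of_elemDom hw hu
  rw [classCount_congr (hup.trans rfl : procOf w u = procOf w (.inl p))]
  exact h p hp

end PSyn
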